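/- Let U1 be Bernoulli(1/2) and U2 = (A, B) a pair of independent Bernoulli(1/2) variables, all mutually independent. Define Z = U1, W = (if Z = 0 then A else B), X2 = W, X1 = U1, Y = indicator( (if X1 = 0 then A else B) = X2 ). Then E[Y] = 1 for the expert. Moreover, for any imitating policy where X1-hat is chosen independently of (U1, A, B), and the environment produces W-hat = (if Z=0 then A else B) with Z = U1, and X2-hat = W-hat, the imitator's reward E[indicator((if X1-hat=0 then A else B) = X2-hat)] <= 3/4 < 1. -/
import Mathlib


/-- Let `U1` be Bernoulli(1/2) and `U2 = (A, B)` a pair of independent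
Bernoulli(1/2) variables, all mutually independent. With `Z = U1`,
`W = (if Z = 0 then A else B)`, `X2 = W`, `X1 = U1`, and
`Y = 1[(if X1 = 0 then A else B) = X2]`, the expert achieves `E[Y] = 1`; but any
imitating policy drawing `X̂1` from a distribution `p` independently of `(U1, A, B)`,
with `Ŵ = (if Z = 0 then A else B)` and `X̂2 = Ŵ`, achieves reward at most `3/4 < 1`. -/
theorem nodescX_not_imitable
    (p : Bool → ℝ) (hp : ∀ b, 0 ≤ p b) (hps : p false + p true = 1) :
    ((1 / 8 : ℝ) * ∑ u1 : Bool, ∑ a : Bool, ∑ b : Bool,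
      (if (if u1 = false then a else b) = (if u1 = false then a else b) then (1 : ℝ) else 0)
      = 1) ∧
    ((1 / 8 : ℝ) * ∑ u1 : Bool, ∑ a : Bool, ∑ b : Bool, ∑ x1 : Bool,
      p x1 * (if (if x1 = false then a else b) = (if u1 = false then a else b)
        then (1 : ℝ) else 0) ≤ 3 / 4) ∧
    ((3 / 4 : ℝ) < 1) := by
  refine ⟨by simp [Fintype.sum_bool]; norm_num, ?_, by norm_num⟩
  have h0 := hp false
  have h1 := hp true
  simp only [Fintype.sum_bool]
  norm_num
  nlinarith [hp false, hp true, hps]
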